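/- Let k ≥ t+2 ≥ 3 and let n be an integer with n ≥ L(k,t) = (t+1) + (k-t+1)·log₂((t+1)(k-t+1)). Define f(m) = (k-t+1)^(m-t)·C(m,t)·S(n-m, k-m) for t ≤ m ≤ k-1. Then f is strictly decreasing in m on [t, k-1], and also (k-t+1)^(m-t)·S(n-m,k-m) is strictly decreasing in m on [t, k-1]. -/

import Mathlib

/-- Stirling numbers of the second kind. -/
def stirling : ℕ → ℕ → ℕ
  | 0, 0 => 1
  | 0, _ + 1 => 0
  | _ + 1, 0 => 0
  | n + 1, k + 1 => stirling n k + (k + 1) * stirling n (k + 1)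

/-- The threshold function `L(k,t) = (t+1) + (k-t+1)·log₂((t+1)(k-t+1))`. -/
noncomputable def Lkt (k t : ℕ) : ℝ :=
  ((t : ℝ) + 1) + ((k : ℝ) - t + 1) * Real.logb 2 (((t : ℝ) + 1) * ((k : ℝ) - t + 1))

/-! Counting maps `[n] → [j]` by their image gives `j ^ n = ∑ᵢ S(n, i) · j(j-1)⋯(j-i+1)`,
hence `j ^ n - j (j - 1) ^ n ≤ j! S(n, j) ≤ j ^ n`. Comparing these bounds for `S(x + 1, j)` and
`S(x, j - 1)` shows `K · S(x, j - 1) < S(x + 1, j)` as soon as `(K + j - 1)(j - 1) ^ x < j ^ x`,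
and since `log (j / (j - 1)) ≥ 1 / j` this holds once `x > j log (K + j - 1)`. With
`K = (t + 1)(k - t + 1)`, `j = k - m`, `x = n - m - 1`, the bound `n ≥ L(k, t)` is enough. Both
claims follow, because going from `m` to `m + 1` multiplies the power by `k - t + 1` and the
binomial coefficient by at most `t + 1`. -/

open Finset

theorem stirling_eq_stirlingSecond : stirling = Nat.stirlingSecond := by
  funext n k
  induction n generalizing k with
  | zero => cases k <;> rfl
  | succ n ih =>
    cases k with
    | zero => rfl
    | succ k => rw [stirling, Nat.stirlingSecond_succ_succ, ih, ih, add_comm]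

namespace Nat

theorem sum_stirlingSecond_mul_descFactorial (n j : ℕ) :
    ∑ i ∈ range (j + 1), stirlingSecond n i * j.descFactorial i = j ^ n := by
  induction n with
  | zero => simp [sum_range_succ']
  | succ n ih =>
    have hsucc : ∀ i ∈ range (j + 1), stirlingSecond (n + 1) (i + 1) * j.descFactorial (i + 1) =
        (i + 1) * stirlingSecond n (i + 1) * j.descFactorial (i + 1) +
          (j - i) * (stirlingSecond n i * j.descFactorial i) := by
      intro i _
      rw [stirlingSecond_succ_succ, descFactorial_succ]
      ring
    have hlast : j.descFactorial (j + 1) = 0 := descFactorial_eq_zero_iff_lt.2 (lt_add_one j)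
    calc ∑ i ∈ range (j + 1), stirlingSecond (n + 1) i * j.descFactorial i
        = ∑ i ∈ range (j + 1), stirlingSecond (n + 1) (i + 1) * j.descFactorial (i + 1) := by
          rw [sum_range_succ', sum_range_succ, hlast]; simp
      _ = ∑ i ∈ range (j + 1), (i * (stirlingSecond n i * j.descFactorial i) +
            (j - i) * (stirlingSecond n i * j.descFactorial i)) := by
          rw [sum_congr rfl hsucc, sum_add_distrib, sum_add_distrib, sum_range_succ _ j, hlast,
            sum_range_succ' (fun i => i * _)]
          simp only [mul_zero, add_zero, zero_mul, mul_assoc]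
      _ = j ^ (n + 1) := by
          rw [pow_succ, ← ih, sum_mul]
          refine sum_congr rfl fun i hi => ?_
          rw [← add_mul, Nat.add_sub_cancel' (mem_range_succ_iff.1 hi), mul_comm]

theorem factorial_mul_stirlingSecond_le_pow (n j : ℕ) : j ! * stirlingSecond n j ≤ j ^ n := by
  rw [← sum_stirlingSecond_mul_descFactorial n j, sum_range_succ, descFactorial_self, mul_comm]
  exact le_add_self

theorem pow_le_factorial_mul_stirlingSecond_add (n j : ℕ) :
    (j + 1) ^ n ≤ (j + 1)! * stirlingSecond n (j + 1) + (j + 1) * j ^ n := by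
  rw [← sum_stirlingSecond_mul_descFactorial n (j + 1), sum_range_succ, descFactorial_self,
    ← sum_stirlingSecond_mul_descFactorial n j, mul_sum, add_comm, mul_comm (j + 1)!]
  refine Nat.add_le_add_left (sum_le_sum fun i hi => ?_) _
  have hij : 1 ≤ j + 1 - i := by have := mem_range.1 hi; omega
  calc stirlingSecond n i * (j + 1).descFactorial i
      ≤ stirlingSecond n i * ((j + 1 - i) * (j + 1).descFactorial i) := by
        gcongr; exact Nat.le_mul_of_pos_left _ hij
    _ = (j + 1) * (stirlingSecond n i * j.descFactorial i) := by
        rw [succ_descFactorial]; ring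

theorem mul_stirlingSecond_lt_stirlingSecond_succ {K j x : ℕ}
    (h : (K + j) * j ^ x < (j + 1) ^ x) :
    K * stirlingSecond x j < stirlingSecond (x + 1) (j + 1) := by
  have hupper := factorial_mul_stirlingSecond_le_pow x j
  have hlower := pow_le_factorial_mul_stirlingSecond_add (x + 1) j
  have hgap : (j + 1) * (K * j ^ x) + (j + 1) * j ^ (x + 1) < (j + 1) ^ (x + 1) :=
    calc _ = (j + 1) * ((K + j) * j ^ x) := by ring
      _ < (j + 1) * (j + 1) ^ x := Nat.mul_lt_mul_of_pos_left h (succ_pos j)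
      _ = (j + 1) ^ (x + 1) := by ring
  refine Nat.lt_of_mul_lt_mul_left (a := (j + 1)!) ?_
  calc (j + 1)! * (K * stirlingSecond x j) = (j + 1) * (K * (j ! * stirlingSecond x j)) := by
        rw [factorial_succ]; ring
    _ ≤ (j + 1) * (K * j ^ x) := by gcongr
    _ < (j + 1)! * stirlingSecond (x + 1) (j + 1) := by omega

theorem choose_succ_le_mul {m t : ℕ} (h : t ≤ m) :
    (m + 1).choose t ≤ (t + 1) * m.choose t := by
  have hle : m + 1 ≤ (t + 1) * (m + 1 - t) := by
    rw [Nat.sub_add_comm h]; nlinarith [Nat.sub_add_cancel h]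
  refine Nat.le_of_mul_le_mul_right ?_ (by omega : 0 < m + 1 - t)
  calc (m + 1).choose t * (m + 1 - t) = m.choose t * (m + 1) := (choose_mul_succ_eq m t).symm
    _ ≤ m.choose t * ((t + 1) * (m + 1 - t)) := by gcongr
    _ = (t + 1) * m.choose t * (m + 1 - t) := by ring

end Nat

namespace Real

theorem mul_pow_lt_pow_of_mul_log_lt {y C : ℝ} (hy : 1 < y) (hC : 0 < C) {x : ℕ}
    (h : y * log C < x) : C * (y - 1) ^ x < y ^ x := by
  have hy0 : 0 < y := by linarith
  have hy1 : 0 < y - 1 := by linarith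
  have hstep : log (y - 1) ≤ log y - 1 / y := by
    have := log_le_sub_one_of_pos (div_pos hy1 hy0)
    rw [log_div hy1.ne' hy0.ne', sub_div, div_self hy0.ne'] at this
    linarith
  have hC' : log C < x * (1 / y) := by rw [mul_one_div, lt_div_iff₀ hy0]; linarith
  rw [← log_lt_log_iff (by positivity) (by positivity), log_mul hC.ne' (by positivity), log_pow,
    log_pow]
  calc log C + x * log (y - 1) ≤ log C + x * (log y - 1 / y) := by gcongr
    _ < x * log y := by rw [mul_sub]; linarith

end Real

open Real

theorem sub_mul_log_lt_add_one_mul_logb_sub {T A D : ℝ} (hT : 1 ≤ T) (hD : 0 ≤ D)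
    (hDA : D + 2 ≤ A) :
    (A - D) * log ((T + 1) * (A + 1) + (A - D - 1)) < (A + 1) * logb 2 ((T + 1) * (A + 1)) - D := by
  set K := (T + 1) * (A + 1)
  have hK : 2 * (A + 1) ≤ K := by nlinarith
  have hlog2 : log 2 < 0.6932 := by linarith [log_two_lt_d9]
  have hlog2' : 0 < log 2 := by positivity
  have hQ : 2 ≤ logb 2 K := by
    rw [le_logb_iff_rpow_le one_lt_two (by linarith)]; norm_num; linarith
  have hlogK : log K = logb 2 K * log 2 := by rw [logb, div_mul_cancel₀ _ hlog2'.ne']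
  have hshift : log (K + (A - D - 1)) ≤ logb 2 K * log 2 + 1 / 2 := by
    have h32 : log (3 / 2) ≤ 1 / 2 := by
      linarith [log_le_sub_one_of_pos (by norm_num : (0 : ℝ) < 3 / 2)]
    calc log (K + (A - D - 1)) ≤ log (3 / 2 * K) := log_le_log (by linarith) (by linarith)
      _ = log (3 / 2) + log K := log_mul (by norm_num) (by linarith)
      _ ≤ logb 2 K * log 2 + 1 / 2 := by linarith
  calc (A - D) * log (K + (A - D - 1)) ≤ (A - D) * (logb 2 K * log 2 + 1 / 2) := by
        gcongr; linarith
    _ < (A + 1) * logb 2 K - D := by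
        have hAD : 0 ≤ (A - D) * logb 2 K := mul_nonneg (by linarith) (by linarith)
        nlinarith [mul_le_mul_of_nonneg_left hlog2.le hAD,
          mul_nonneg (by linarith : 0 ≤ A) (by linarith : 0 ≤ logb 2 K - 2),
          mul_nonneg hD (by linarith : 0 ≤ logb 2 K - 2)]

theorem mul_log_lt_sub_of_Lkt_le {k t m n j : ℕ} (ht : 1 ≤ t) (hm : t ≤ m) (hmk : m + 2 ≤ k)
    (hn : Lkt k t ≤ n) (hj : k - m = j + 1) :
    (j + 1) * log (((t + 1) * (k - t + 1) : ℕ) + j) < n - m - 1 := by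
  have hreal := sub_mul_log_lt_add_one_mul_logb_sub (T := t) (A := (k - t : ℕ))
    (D := (m - t : ℕ)) (by exact_mod_cast ht) (by positivity)
    (by exact_mod_cast (by omega : m - t + 2 ≤ k - t))
  have hA : ((k - t : ℕ) : ℝ) = k - t := by push_cast [Nat.cast_sub (by omega : t ≤ k)]; ring
  have hD : ((k - t : ℕ) : ℝ) - (m - t : ℕ) = j + 1 := by
    rw [← Nat.cast_sub (by omega), ← Nat.cast_succ]; congr 1; omega
  have hK : (t + 1) * (((k - t : ℕ) : ℝ) + 1) = ((t + 1) * (k - t + 1) : ℕ) := by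
    push_cast; ring
  have hmD : (m : ℝ) = t + (m - t : ℕ) := by push_cast [Nat.cast_sub hm]; ring
  rw [Lkt, ← hA, hK] at hn
  rw [hD, hK, add_sub_cancel_right] at hreal
  linarith

theorem mul_stirling_lt_stirling_of_Lkt_le {k t m n : ℕ} (ht : 1 ≤ t) (hm : t ≤ m)
    (hmk : m + 2 ≤ k) (hn : Lkt k t ≤ n) :
    (t + 1) * (k - t + 1) * stirling (n - (m + 1)) (k - (m + 1)) < stirling (n - m) (k - m) := by
  obtain ⟨j, hj⟩ : ∃ j, k - m = j + 1 := ⟨k - m - 1, by omega⟩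
  have hlog := mul_log_lt_sub_of_Lkt_le ht hm hmk hn hj
  have hj1 : (1 : ℝ) ≤ j := by exact_mod_cast (by omega : 1 ≤ j)
  have hC : (1 : ℝ) < ((t + 1) * (k - t + 1) : ℕ) + j := by
    have : (1 : ℝ) ≤ ((t + 1) * (k - t + 1) : ℕ) := by
      exact_mod_cast Nat.one_le_iff_ne_zero.2 (by positivity)
    linarith
  have hmn : m + 1 < n := by
    have : 0 < (j + 1) * log (((t + 1) * (k - t + 1) : ℕ) + j) := by
      have := log_pos hC; positivity
    exact_mod_cast (by linarith : (m : ℝ) + 1 < n)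
  obtain ⟨x, hxn⟩ : ∃ x, n - m = x + 1 := ⟨n - m - 1, by omega⟩
  have hx : (x : ℝ) = n - m - 1 := by
    rw [show x = n - (m + 1) by omega, Nat.cast_sub hmn.le]; push_cast; ring
  rw [show n - (m + 1) = x by omega, show k - (m + 1) = j by omega, hj, hxn,
    stirling_eq_stirlingSecond]
  refine Nat.mul_stirlingSecond_lt_stirlingSecond_succ ?_
  have := Real.mul_pow_lt_pow_of_mul_log_lt (y := j + 1) (x := x) (by linarith)
    (by linarith) (hx ▸ hlog)
  rw [add_sub_cancel_right] at this
  exact_mod_cast this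

theorem pow_succ_mul_mul_lt {q d c c' r s s' : ℕ} (hq : 0 < q) (hc : 0 < c) (hc' : c' ≤ r * c)
    (hs : r * q * s' < s) : q ^ (d + 1) * c' * s' < q ^ d * c * s :=
  calc q ^ (d + 1) * c' * s' = q ^ d * (c' * (q * s')) := by ring
    _ ≤ q ^ d * (r * c * (q * s')) := by gcongr
    _ = q ^ d * (c * (r * q * s')) := by ring
    _ < q ^ d * (c * s) := by gcongr
    _ = q ^ d * c * s := by ring

theorem stmt_9_general (k t n : ℕ) (ht : 1 ≤ t) (hn : (n : ℝ) ≥ Lkt k t) :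
    (∀ m : ℕ, t ≤ m → m + 1 ≤ k - 1 →
      (k - t + 1) ^ (m + 1 - t) * Nat.choose (m + 1) t * stirling (n - (m + 1)) (k - (m + 1)) <
        (k - t + 1) ^ (m - t) * Nat.choose m t * stirling (n - m) (k - m)) ∧
    (∀ m : ℕ, t ≤ m → m + 1 ≤ k - 1 →
      (k - t + 1) ^ (m + 1 - t) * stirling (n - (m + 1)) (k - (m + 1)) <
        (k - t + 1) ^ (m - t) * stirling (n - m) (k - m)) := by
  have key (m : ℕ) (hm : t ≤ m) (hmk : m + 1 ≤ k - 1) :=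
    mul_stirling_lt_stirling_of_Lkt_le ht hm (by omega) hn
  refine ⟨fun m hm hmk => ?_, fun m hm hmk => ?_⟩
  · rw [Nat.sub_add_comm hm]
    exact pow_succ_mul_mul_lt (Nat.succ_pos _) (Nat.choose_pos hm) (Nat.choose_succ_le_mul hm)
      (key m hm hmk)
  · rw [Nat.sub_add_comm hm]
    simpa using pow_succ_mul_mul_lt (c := 1) (c' := 1) (Nat.succ_pos _) one_pos (by omega)
      (key m hm hmk)

theorem stmt_9 (k t n : ℕ) (ht : 1 ≤ t) (hk : t + 2 ≤ k) (hn : (n : ℝ) ≥ Lkt k t) :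
    (∀ m : ℕ, t ≤ m → m + 1 ≤ k - 1 →
      (k - t + 1) ^ (m + 1 - t) * Nat.choose (m + 1) t * stirling (n - (m + 1)) (k - (m + 1)) <
        (k - t + 1) ^ (m - t) * Nat.choose m t * stirling (n - m) (k - m)) ∧
    (∀ m : ℕ, t ≤ m → m + 1 ≤ k - 1 →
      (k - t + 1) ^ (m + 1 - t) * stirling (n - (m + 1)) (k - (m + 1)) <
        (k - t + 1) ^ (m - t) * stirling (n - m) (k - m)) :=
  stmt_9_general k t n ht hn
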